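/- Let A be an associative ring, let q be a central invertible element of A with 1 + q^2 invertible (in particular q^2 ≠ −1 when A is an algebra over a field), and let e, f ∈ A satisfy f^2 = 0. Define g := e·f − q^{-1}·f·e, and assume the Serre-type relation e·g = q·g·e. Then g^2 = 0. -/
import Mathlib


/-- If `f² = 0` and the Serre-type relation `e·g = q·g·e` holds for
`g := e·f − q⁻¹·f·e` (with `q` central invertible and `1 + q²` invertible),
then `g² = 0`. -/
theorem stmt6 {A : Type*} [Ring A] (q : Aˣ) (hqc : ∀ x : A, (q : A) * x = x * (q : A))
    (hq2 : IsUnit (1 + (q : A) ^ 2)) (e f : A) (hf : f ^ 2 = 0)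
    (g : A) (hg : g = e * f - (↑q⁻¹ : A) * (f * e)) (hserre : e * g = (q : A) * (g * e)) :
    g ^ 2 = 0 := by
  set u := (q : A) with hu
  set v := ((q⁻¹ : Aˣ) : A) with hv
  have huv : u * v = 1 := by simp [hu, hv]
  have hvu : v * u = 1 := by simp [hu, hv]
  have hvc : ∀ x : A, v * x = x * v := by
    intro x
    calc v * x = v * x * (u * v) := by rw [huv, mul_one]
      _ = v * (x * u) * v := by noncomm_ring
      _ = v * (u * x) * v := by rw [← hqc]
      _ = (v * u) * (x * v) := by noncomm_ring
      _ = x * v := by rw [hvu, one_mul]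
  have hff : f * f = 0 := by rw [← sq]; exact hf
  -- f * g = f * e * f
  have hfg : f * g = f * e * f := by
    rw [hg, mul_sub]
    have h1 : f * (v * (f * e)) = v * (f * f * e) := by
      calc f * (v * (f * e)) = (f * v) * (f * e) := by rw [mul_assoc]
        _ = (v * f) * (f * e) := by rw [hvc f]
        _ = v * (f * f * e) := by noncomm_ring
    rw [h1, hff, zero_mul, mul_zero, sub_zero, mul_assoc]
  -- g * f = - v * (f * e * f)
  have hgf : g * f = -(v * (f * e * f)) := by
    rw [hg, sub_mul]
    have h1 : e * f * f = e * (f * f) := by rw [mul_assoc]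
    rw [h1, hff, mul_zero, zero_sub]
    congr 1
    noncomm_ring
  have hge : g * e = v * (e * g) := by
    rw [hserre, ← mul_assoc, hvu, one_mul]
  -- way 1 : g^2 = e * (f*e*f) - (f*e*f) * e
  have w1 : g * g = e * (f * e * f) - (f * e * f) * e := by
    calc g * g = (e * f - v * (f * e)) * g := by rw [← hg]
      _ = e * (f * g) - v * (f * (e * g)) := by noncomm_ring
      _ = e * (f * g) - v * (f * (u * (g * e))) := by rw [hserre]
      _ = e * (f * g) - v * ((f * u) * (g * e)) := by noncomm_ring
      _ = e * (f * g) - v * ((u * f) * (g * e)) := by rw [← hqc f]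
      _ = e * (f * g) - (v * u) * (f * (g * e)) := by noncomm_ring
      _ = e * (f * g) - (f * g) * e := by rw [hvu, one_mul, mul_assoc]
      _ = e * (f * e * f) - (f * e * f) * e := by rw [hfg]
  -- way 2 : g^2 = - v^2 * g^2
  have w2 : g * g = -(v * (v * (g * g))) := by
    have step : g * g = g * (e * f) - v * (g * (f * e)) := by
      nth_rewrite 2 [hg]
      rw [mul_sub]
      congr 1
      calc g * (v * (f * e)) = (g * v) * (f * e) := by rw [mul_assoc]
        _ = (v * g) * (f * e) := by rw [hvc g]
        _ = v * (g * (f * e)) := by rw [mul_assoc]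
    calc g * g = g * (e * f) - v * (g * (f * e)) := step
      _ = (g * e) * f - v * ((g * f) * e) := by noncomm_ring
      _ = (v * (e * g)) * f - v * (-(v * (f * e * f)) * e) := by rw [hge, hgf]
      _ = v * (e * (g * f)) + v * (v * ((f * e * f) * e)) := by noncomm_ring
      _ = v * (e * (-(v * (f * e * f)))) + v * (v * ((f * e * f) * e)) := by rw [hgf]
      _ = v * (-((e * v) * (f * e * f))) + v * (v * ((f * e * f) * e)) := by noncomm_ring
      _ = v * (-((v * e) * (f * e * f))) + v * (v * ((f * e * f) * e)) := by rw [hvc e]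
      _ = -(v * (v * (e * (f * e * f) - (f * e * f) * e))) := by noncomm_ring
      _ = -(v * (v * (g * g))) := by rw [← w1]
  have h3 : u * (u * (v * (v * (g * g)))) = g * g := by
    calc u * (u * (v * (v * (g * g)))) = u * ((u * v) * (v * (g * g))) := by noncomm_ring
      _ = u * (v * (g * g)) := by rw [huv, one_mul]
      _ = (u * v) * (g * g) := by rw [mul_assoc]
      _ = g * g := by rw [huv, one_mul]
  have h4 : u * (u * (g * g)) = -(g * g) := by
    have hstep := congrArg (fun x => u * (u * x)) w2
    simp only [mul_neg] at hstep
    rw [hstep, h3]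
  have key : (1 + u ^ 2) * (g * g) = 0 := by
    calc (1 + u ^ 2) * (g * g) = g * g + u * (u * (g * g)) := by noncomm_ring
      _ = g * g + -(g * g) := by rw [h4]
      _ = 0 := by abel
  obtain ⟨w, hw⟩ := hq2
  calc g ^ 2 = g * g := sq g
    _ = (↑w⁻¹ : A) * (↑w * (g * g)) := by rw [← mul_assoc]; simp
    _ = (↑w⁻¹ : A) * ((1 + u ^ 2) * (g * g)) := by rw [hw]
    _ = 0 := by rw [key, mul_zero]
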